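/- arXiv:1407.1243 — 8 statements merged into one kernel-verified Lean document; each statement's English description precedes it below -/
import Mathlib

section
/- Let F be an algebra of partial functions and let f ∈ F. Then the set ↓f = {g ∈ F : g ⊆ f}, partially ordered by inclusion, is a Boolean algebra with least element ∅, greatest element f, meet given by intersection, and the complement of g ∈ ↓f given by A(g)∘f, which moreover equals f \ g as a set of ordered pairs. -/
/-! Algebras of partial functions: basic definitions. -/

namespace PFAlg

variable {X Y : Type*}

/-- `f ⊆ X × X` is a partial function. -/
def IsPF (f : Set (X × X)) : Prop :=
  ∀ ⦃x y z : X⦄, (x, y) ∈ f → (x, z) ∈ f → y = z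

/-- Composition of partial functions (binary relations), written left-to-right:
`f ∘ g = {(x,z) : ∃ y, (x,y) ∈ f and (y,z) ∈ g}`. -/
def comp (f g : Set (X × X)) : Set (X × X) :=
  {p | ∃ y, (p.1, y) ∈ f ∧ (y, p.2) ∈ g}

/-- Antidomain: the diagonal of the set of points where `f` is undefined. -/
def adom (f : Set (X × X)) : Set (X × X) :=
  {p | p.1 = p.2 ∧ ∀ y, (p.1, y) ∉ f}

/-- An algebra of partial functions on the base `X`: a nonempty collection of
partial functions closed under composition, intersection and antidomain. -/
structure IsPFAlgebra (F : Set (Set (X × X))) : Prop where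
  nonempty : F.Nonempty
  pf : ∀ f ∈ F, IsPF f
  comp_mem : ∀ f ∈ F, ∀ g ∈ F, comp f g ∈ F
  inter_mem : ∀ f ∈ F, ∀ g ∈ F, f ∩ g ∈ F
  adom_mem : ∀ f ∈ F, adom f ∈ F

/-- `m` is the supremum of `S` in the poset `(F, ⊆)`. -/
def IsLUBIn (F S : Set (Set (X × X))) (m : Set (X × X)) : Prop :=
  m ∈ F ∧ (∀ s ∈ S, s ⊆ m) ∧ ∀ c ∈ F, (∀ s ∈ S, s ⊆ c) → m ⊆ c

/-- `m` is the infimum of `S` in the poset `(F, ⊆)`. -/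
def IsGLBIn (F S : Set (Set (X × X))) (m : Set (X × X)) : Prop :=
  m ∈ F ∧ (∀ s ∈ S, m ⊆ s) ∧ ∀ c ∈ F, (∀ s ∈ S, c ⊆ s) → c ⊆ m

/-- `b` is an atom of `F`: a minimal element of `F \ {∅}`. -/
def IsAtomOf (F : Set (Set (X × X))) (b : Set (X × X)) : Prop :=
  b ∈ F ∧ b ≠ ∅ ∧ ∀ g ∈ F, g ≠ ∅ → g ⊆ b → g = b

/-- `F` is atomic: every nonempty member contains an atom. -/
def Atomic (F : Set (Set (X × X))) : Prop :=
  ∀ f ∈ F, f ≠ ∅ → ∃ b, IsAtomOf F b ∧ b ⊆ f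

/-- A representation of `F` by partial functions over the base `Y`. -/
structure IsRep (F : Set (Set (X × X))) (θ : Set (X × X) → Set (Y × Y)) : Prop where
  injOn : Set.InjOn θ F
  pf : ∀ f ∈ F, IsPF (θ f)
  comp_eq : ∀ f ∈ F, ∀ g ∈ F, θ (comp f g) = comp (θ f) (θ g)
  inter_eq : ∀ f ∈ F, ∀ g ∈ F, θ (f ∩ g) = θ f ∩ θ g
  adom_eq : ∀ f ∈ F, θ (adom f) = adom (θ f)

/-- `θ` is meet complete: it turns existing infima of nonempty subsets into intersections. -/
def MeetComplete (F : Set (Set (X × X))) (θ : Set (X × X) → Set (Y × Y)) : Prop :=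
  ∀ S ⊆ F, S.Nonempty → ∀ m, IsGLBIn F S m → θ m = ⋂ s ∈ S, θ s

/-- `θ` is join complete: it turns existing suprema into unions. -/
def JoinComplete (F : Set (Set (X × X))) (θ : Set (X × X) → Set (Y × Y)) : Prop :=
  ∀ S ⊆ F, ∀ m, IsLUBIn F S m → θ m = ⋃ s ∈ S, θ s

/-- `θ` is an atomic representation. -/
def AtomicRep (F : Set (Set (X × X))) (θ : Set (X × X) → Set (Y × Y)) : Prop :=
  ∀ f ∈ F, ∀ p ∈ θ f, ∃ b, IsAtomOf F b ∧ p ∈ θ b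

/-- Composition in `F` is completely left-distributive over joins. -/
def CompLeftDistribJoins (F : Set (Set (X × X))) : Prop :=
  ∀ a ∈ F, ∀ S ⊆ F, ∀ m, IsLUBIn F S m → IsLUBIn F ((fun s => comp a s) '' S) (comp a m)

/-- Composition in `F` is completely left-distributive over meets. -/
def CompLeftDistribMeets (F : Set (Set (X × X))) : Prop :=
  ∀ a ∈ F, ∀ S ⊆ F, S.Nonempty → ∀ m, IsGLBIn F S m →
    IsGLBIn F ((fun s => comp a s) '' S) (comp a m)

end PFAlg

/-!
Since `f` is a partial function, a pair of `f` lies outside `g ⊆ f` exactly when its first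
coordinate is outside the domain of `g`; hence `A(g)∘f = f \ g`. So `F` is closed under relative
complements, and below `f` also under unions (`a ∪ b = f \ ((f \ a) \ b)`). Thus `↓f` is a
sublattice of the power set that is closed under `\` and contains `∅`, i.e. a generalized
Boolean algebra, and its top element `f` makes it a Boolean algebra with `gᶜ = f \ g`.
-/

namespace PFAlg

variable {X : Type*} {F : Set (Set (X × X))} {f g : Set (X × X)}

theorem comp_adom_eq_diff (hf : IsPF f) (hgf : g ⊆ f) : comp (adom g) f = f \ g := by
  ext ⟨x, z⟩
  constructor
  · rintro ⟨y, ⟨hxy, hx⟩, hyz⟩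
    obtain rfl : x = y := hxy
    exact ⟨hyz, hx z⟩
  · rintro ⟨hxz, hxz'⟩
    refine ⟨x, ⟨rfl, fun w hxw => hxz' ?_⟩, hxz⟩
    rwa [← hf (hgf hxw) hxz]

namespace IsPFAlgebra

variable (hF : IsPFAlgebra F)
include hF

theorem diff_mem_of_subset (hf : f ∈ F) (hg : g ∈ F) (hgf : g ⊆ f) : f \ g ∈ F :=
  comp_adom_eq_diff (hF.pf f hf) hgf ▸ hF.comp_mem _ (hF.adom_mem g hg) f hf

theorem diff_mem (hf : f ∈ F) (hg : g ∈ F) : f \ g ∈ F := by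
  simpa using hF.diff_mem_of_subset hf (hF.inter_mem f hf g hg) Set.inter_subset_left

theorem empty_mem : ∅ ∈ F := by
  obtain ⟨f, hf⟩ := hF.nonempty
  simpa using hF.diff_mem hf hf

theorem union_mem_of_subset {a b : Set (X × X)} (hf : f ∈ F) (ha : a ∈ F) (hb : b ∈ F)
    (haf : a ⊆ f) (hbf : b ⊆ f) : a ∪ b ∈ F := by
  have h : f \ ((f \ a) \ b) = a ∪ b := by
    rw [Set.sdiff_sdiff, Set.sdiff_sdiff_cancel_left (Set.union_subset haf hbf)]
  exact h ▸ hF.diff_mem hf (hF.diff_mem (hF.diff_mem hf ha) hb)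

abbrev downsetBooleanAlgebra (hf : f ∈ F) : BooleanAlgebra {g : Set (X × X) // g ∈ F ∧ g ⊆ f} :=
  letI : Max {g : Set (X × X) // g ∈ F ∧ g ⊆ f} :=
    ⟨fun a b => ⟨a.1 ∪ b.1, hF.union_mem_of_subset hf a.2.1 b.2.1 a.2.2 b.2.2,
      Set.union_subset a.2.2 b.2.2⟩⟩
  letI : Min {g : Set (X × X) // g ∈ F ∧ g ⊆ f} :=
    ⟨fun a b => ⟨a.1 ∩ b.1, hF.inter_mem _ a.2.1 _ b.2.1, Set.inter_subset_left.trans a.2.2⟩⟩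
  letI : SDiff {g : Set (X × X) // g ∈ F ∧ g ⊆ f} :=
    ⟨fun a b => ⟨a.1 \ b.1, hF.diff_mem a.2.1 b.2.1, Set.sdiff_subset.trans a.2.2⟩⟩
  letI : Bot {g : Set (X × X) // g ∈ F ∧ g ⊆ f} := ⟨⟨∅, hF.empty_mem, Set.empty_subset f⟩⟩
  letI : GeneralizedBooleanAlgebra {g : Set (X × X) // g ∈ F ∧ g ⊆ f} :=
    Subtype.val_injective.generalizedBooleanAlgebra _ Iff.rfl Iff.rfl (fun _ _ => rfl)
      (fun _ _ => rfl) rfl (fun _ _ => rfl)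
  letI : OrderTop {g : Set (X × X) // g ∈ F ∧ g ⊆ f} :=
    { top := ⟨f, hf, subset_rfl⟩, le_top := fun a => a.2.2 }
  GeneralizedBooleanAlgebra.toBooleanAlgebra

end IsPFAlgebra

end PFAlg

open PFAlg in
/-- For `f` in an algebra of partial functions `F`, the set
`↓f = {g ∈ F : g ⊆ f}`, ordered by inclusion, is a Boolean algebra with least element `∅`,
greatest element `f`, meet given by intersection, and complement of `g` given by
`A(g)∘f`, which equals `f \ g`. -/
theorem stmt0 {X : Type*} (F : Set (Set (X × X))) (hF : IsPFAlgebra F)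
    (f : Set (X × X)) (hf : f ∈ F) :
    (∀ g ∈ F, g ⊆ f → comp (adom g) f = f \ g) ∧
    ∃ B : BooleanAlgebra {g : Set (X × X) // g ∈ F ∧ g ⊆ f},
      (∀ a b : {g : Set (X × X) // g ∈ F ∧ g ⊆ f},
        B.le a b ↔ (a : Set (X × X)) ⊆ (b : Set (X × X))) ∧
      ((B.bot : {g : Set (X × X) // g ∈ F ∧ g ⊆ f}) : Set (X × X)) = ∅ ∧
      ((B.top : {g : Set (X × X) // g ∈ F ∧ g ⊆ f}) : Set (X × X)) = f ∧
      (∀ a b : {g : Set (X × X) // g ∈ F ∧ g ⊆ f},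
        ((B.inf a b : {g : Set (X × X) // g ∈ F ∧ g ⊆ f}) : Set (X × X)) =
          (a : Set (X × X)) ∩ (b : Set (X × X))) ∧
      (∀ a : {g : Set (X × X) // g ∈ F ∧ g ⊆ f},
        ((B.compl a : {g : Set (X × X) // g ∈ F ∧ g ⊆ f}) : Set (X × X)) =
          comp (adom (a : Set (X × X))) f) := by
  refine ⟨fun g _ hgf => comp_adom_eq_diff (hF.pf f hf) hgf, hF.downsetBooleanAlgebra hf,
    fun _ _ => Iff.rfl, rfl, rfl, fun _ _ => rfl,
    fun a => (comp_adom_eq_diff (hF.pf f hf) a.2.2).symm⟩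
end

section
/- Let F be an algebra of partial functions and let θ be a representation of F by partial functions. If θ is meet complete, then θ is join complete. -/
/-!
Let `m` be the join of `S` in `F`. The restrictions `A(s) ∘ m` of `m` to the complement of the
domain of `s` have meet `∅` in `F`: anything below all of them is disjoint in domain from every
`s`, hence from `m` by minimality of `m`, yet lies inside `m`. Meet completeness therefore makes
the `θ (A(s) ∘ m) = A(θ s) ∘ θ m` intersect to `θ ∅ = ∅`. A pair of `θ m` missing from every
`θ s` would lie in all of them, because `θ m` is a partial function extending each `θ s`.
-/

namespace PFAlg

section Relations

variable {α : Type*}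

theorem mem_comp_adom {f g : Set (α × α)} {p : α × α} :
    p ∈ comp (adom f) g ↔ (∀ y, (p.1, y) ∉ f) ∧ p ∈ g := by
  constructor
  · rintro ⟨y, ⟨hy, hdom⟩, hg⟩
    obtain rfl : p.1 = y := hy
    exact ⟨hdom, hg⟩
  · rintro ⟨hdom, hg⟩
    exact ⟨p.1, ⟨rfl, hdom⟩, hg⟩

theorem comp_adom_self (f : Set (α × α)) : comp (adom f) f = ∅ :=
  Set.eq_empty_iff_forall_notMem.2 fun p hp => (mem_comp_adom.1 hp).1 p.2 (mem_comp_adom.1 hp).2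

theorem IsPF.mem_comp_adom_of_notMem {f g : Set (α × α)} (hg : IsPF g) (hfg : f ⊆ g)
    {x y : α} (hxy : (x, y) ∈ g) (hnot : (x, y) ∉ f) : (x, y) ∈ comp (adom f) g :=
  mem_comp_adom.2 ⟨fun _ hw => hnot (hg (hfg hw) hxy ▸ hw), hxy⟩

end Relations

variable {X Y : Type*} {F : Set (Set (X × X))}

theorem IsPFAlgebra.empty_mem_s2 (hF : IsPFAlgebra F) : ∅ ∈ F := by
  obtain ⟨f, hf⟩ := hF.nonempty
  simpa only [comp_adom_self] using hF.comp_mem _ (hF.adom_mem f hf) f hf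

theorem IsRep.map_empty {θ : Set (X × X) → Set (Y × Y)} (hF : IsPFAlgebra F) (hθ : IsRep F θ) :
    θ ∅ = ∅ := by
  obtain ⟨f, hf⟩ := hF.nonempty
  simpa only [comp_adom_self, hθ.adom_eq f hf] using
    hθ.comp_eq _ (hF.adom_mem f hf) f hf

theorem IsRep.monotoneOn {θ : Set (X × X) → Set (Y × Y)} (hθ : IsRep F θ)
    {f g : Set (X × X)} (hf : f ∈ F) (hg : g ∈ F) (hfg : f ⊆ g) : θ f ⊆ θ g := by
  rw [← Set.inter_eq_left.2 hfg, hθ.inter_eq f hf g hg]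
  exact Set.inter_subset_right

theorem eq_empty_of_isLUBIn_empty (hF : IsPFAlgebra F) {m : Set (X × X)}
    (hm : IsLUBIn F ∅ m) : m = ∅ :=
  Set.subset_empty_iff.1 (hm.2.2 ∅ hF.empty_mem_s2 (by simp))

theorem IsLUBIn.isGLBIn_empty_comp_adom (hF : IsPFAlgebra F) {S : Set (Set (X × X))}
    (hS : S.Nonempty) {m : Set (X × X)} (hm : IsLUBIn F S m) :
    IsGLBIn F ((fun s => comp (adom s) m) '' S) ∅ := by
  obtain ⟨hmF, hub, hlub⟩ := hm
  refine ⟨hF.empty_mem_s2, fun _ _ => Set.empty_subset _, fun c hc hcS => ?_⟩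
  have hc_outside : ∀ s ∈ S, ∀ p ∈ c, (∀ y, (p.1, y) ∉ s) ∧ p ∈ m := fun s hs p hp =>
    mem_comp_adom.1 (hcS _ ⟨s, hs, rfl⟩ hp)
  have hm_sub : m ⊆ comp (adom c) m := by
    refine hlub _ (hF.comp_mem _ (hF.adom_mem c hc) m hmF) fun s hs p hp => ?_
    exact mem_comp_adom.2 ⟨fun w hw => (hc_outside s hs _ hw).1 p.2 hp, hub s hs hp⟩
  obtain ⟨s₀, hs₀⟩ := hS
  intro p hp
  exact (mem_comp_adom.1 (hm_sub (hc_outside s₀ hs₀ p hp).2)).1 p.2 hp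

end PFAlg

open PFAlg in
/-- a meet-complete representation by partial functions is join complete. -/
theorem stmt2 {X Y : Type*} (F : Set (Set (X × X))) (hF : IsPFAlgebra F)
    (θ : Set (X × X) → Set (Y × Y)) (hθ : IsRep F θ)
    (hmeet : MeetComplete F θ) :
    JoinComplete F θ := by
  intro S hSF m hm
  rcases S.eq_empty_or_nonempty with rfl | hS
  · simp [eq_empty_of_isLUBIn_empty hF hm, hθ.map_empty hF]
  refine Set.Subset.antisymm ?_
    (Set.iUnion₂_subset fun s hs => hθ.monotoneOn (hSF hs) hm.1 (hm.2.1 s hs))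
  rintro ⟨x, y⟩ hxy
  by_contra hnot
  simp only [Set.mem_iUnion, not_exists] at hnot
  have hT : (fun s => comp (adom s) m) '' S ⊆ F := by
    rintro _ ⟨s, hs, rfl⟩
    exact hF.comp_mem _ (hF.adom_mem s (hSF hs)) m hm.1
  have hθ_inter := hmeet _ hT (hS.image _) ∅ (hm.isGLBIn_empty_comp_adom hF hS)
  rw [hθ.map_empty hF, Set.biInter_image] at hθ_inter
  have hmem : (x, y) ∈ ⋂ s ∈ S, θ (comp (adom s) m) := by
    refine Set.mem_iInter₂.2 fun s hs => ?_
    rw [hθ.comp_eq _ (hF.adom_mem s (hSF hs)) m hm.1, hθ.adom_eq s (hSF hs)]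
    exact (hθ.pf m hm.1).mem_comp_adom_of_notMem
      (hθ.monotoneOn (hSF hs) hm.1 (hm.2.1 s hs)) hxy (hnot s hs)
  rw [← hθ_inter] at hmem
  exact hmem
end

section
/- Let F be an algebra of partial functions and let θ be a representation of F by partial functions. If θ is join complete, then θ is meet complete. -/
/-!
Inside an algebra of partial functions, `A(f ⊓ g) ∘ g = g \ f`, so `F` is closed under
differences and every representation preserves them. If `m` is the meet of `S` and `s₀ ∈ S`,
then `s₀` is the join of `{m} ∪ {s₀ \ s : s ∈ S}`: for an upper bound `c`, the element `s₀ \ c`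
lies below every `s ∈ S`, hence below `m ⊆ c`, so it is empty. Join completeness then splits
`θ s₀` as `θ m ∪ ⋃ (θ s₀ \ θ s)`, and a pair lying in every `θ s` must lie in `θ m`.
-/

namespace PFAlg

variable {X Y : Type*}

theorem comp_adom_inter_eq_diff {f g : Set (X × X)} (hg : IsPF g) :
    comp (adom (f ∩ g)) g = g \ f := by
  ext ⟨u, v⟩
  constructor
  · rintro ⟨w, ⟨huw, hundef⟩, hwv⟩
    obtain rfl : u = w := huw
    exact ⟨hwv, fun hf => hundef v ⟨hf, hwv⟩⟩
  · rintro ⟨huv, hnf⟩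
    refine ⟨u, ⟨rfl, fun z hz => hnf ?_⟩, huv⟩
    obtain rfl : z = v := hg hz.2 huv
    exact hz.1

theorem IsPFAlgebra.diff_mem_s3 {F : Set (Set (X × X))} (hF : IsPFAlgebra F) {f g : Set (X × X)}
    (hf : f ∈ F) (hg : g ∈ F) : g \ f ∈ F := by
  rw [← comp_adom_inter_eq_diff (hF.pf g hg)]
  exact hF.comp_mem _ (hF.adom_mem _ (hF.inter_mem f hf g hg)) g hg

theorem IsRep.map_diff {F : Set (Set (X × X))} (hF : IsPFAlgebra F)
    {θ : Set (X × X) → Set (Y × Y)} (hθ : IsRep F θ) {f g : Set (X × X)}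
    (hf : f ∈ F) (hg : g ∈ F) : θ (g \ f) = θ g \ θ f := by
  have hfg : f ∩ g ∈ F := hF.inter_mem f hf g hg
  rw [← comp_adom_inter_eq_diff (hF.pf g hg), ← comp_adom_inter_eq_diff (hθ.pf g hg),
    hθ.comp_eq _ (hF.adom_mem _ hfg) g hg, hθ.adom_eq _ hfg, hθ.inter_eq f hf g hg]

theorem IsRep.mono {F : Set (Set (X × X))} {θ : Set (X × X) → Set (Y × Y)} (hθ : IsRep F θ)
    {f g : Set (X × X)} (hf : f ∈ F) (hg : g ∈ F) (hfg : f ⊆ g) : θ f ⊆ θ g := by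
  have h := hθ.inter_eq f hf g hg
  rw [Set.inter_eq_self_of_subset_left hfg] at h
  exact h ▸ Set.inter_subset_right

theorem isLUBIn_insert_diff_of_isGLBIn {F S : Set (Set (X × X))}
    (hdiff : ∀ f ∈ F, ∀ g ∈ F, g \ f ∈ F) (hS : S ⊆ F) {m s₀ : Set (X × X)}
    (hs₀ : s₀ ∈ S) (hm : IsGLBIn F S m) :
    IsLUBIn F (insert m ((s₀ \ ·) '' S)) s₀ := by
  obtain ⟨-, hm_le, hm_greatest⟩ := hm
  refine ⟨hS hs₀, ?_, fun c hc hc_ub => ?_⟩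
  · rintro t (rfl | ⟨s, -, rfl⟩)
    · exact hm_le s₀ hs₀
    · exact Set.sdiff_subset
  · have hlower : s₀ \ c ⊆ m := by
      refine hm_greatest _ (hdiff c hc s₀ (hS hs₀)) fun s hs p ⟨hp₀, hpc⟩ => ?_
      by_contra hps
      exact hpc (hc_ub _ (Set.mem_insert_of_mem _ ⟨s, hs, rfl⟩) ⟨hp₀, hps⟩)
    intro p hp₀
    by_contra hpc
    exact hpc (hc_ub m (Set.mem_insert _ _) (hlower ⟨hp₀, hpc⟩))

end PFAlg

open PFAlg in
/-- a join-complete representation by partial functions is meet complete. -/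
theorem stmt3 {X Y : Type*} (F : Set (Set (X × X))) (hF : IsPFAlgebra F)
    (θ : Set (X × X) → Set (Y × Y)) (hθ : IsRep F θ)
    (hjoin : JoinComplete F θ) :
    MeetComplete F θ := by
  rintro S hS ⟨s₀, hs₀⟩ m hm
  refine subset_antisymm
    (Set.subset_iInter₂ fun s hs => hθ.mono hm.1 (hS hs) (hm.2.1 s hs)) fun p hp => ?_
  have hp_mem : ∀ s ∈ S, p ∈ θ s := Set.mem_iInter₂.1 hp
  have hT : insert m ((s₀ \ ·) '' S) ⊆ F :=
    Set.insert_subset hm.1 (Set.image_subset_iff.2 fun s hs => hF.diff_mem_s3 (hS hs) (hS hs₀))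
  have hsplit := hjoin _ hT s₀
    (isLUBIn_insert_diff_of_isGLBIn (fun f hf g hg => hF.diff_mem_s3 hf hg) hS hs₀ hm)
  have hp₀ := hp_mem s₀ hs₀
  rw [hsplit, Set.biUnion_insert, Set.biUnion_image] at hp₀
  rcases hp₀ with hpm | hpdiff
  · exact hpm
  · obtain ⟨s, hs, hps⟩ := Set.mem_iUnion₂.1 hpdiff
    rw [hθ.map_diff hF (hS hs) (hS hs₀)] at hps
    exact absurd (hp_mem s hs) hps.2
end

section
/- There exists an algebra of partial functions F that is atomic, together with an atom f of F, a countable family (gᵢ)_{i∈ℕ} in F whose supremum ⨆ᵢ gᵢ exists in (F, ⊆) and satisfies f∘gᵢ = ∅ for every i but f∘(⨆ᵢ gᵢ) = f ≠ ∅, and a countable family (hᵢ)_{i∈ℕ} in F whose infimum in (F, ⊆) is ∅ and satisfies f∘hᵢ = f for every i but f∘∅ = ∅. In particular, composition in F is neither completely left-distributive over joins nor completely left-distributive over meets. -/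
/-! The base is `ℕ`, with `0` playing the role of a point at infinity. `F` consists of the
arrow `f = {(1, 0)}` and the partial identities on the sets `A ⊆ ℕ` whose membership agrees
with that of `0` at all but finitely many points (the clopen sets of the one-point
compactification of `ℕ \ {0}`); its atoms are `f` and the diagonals of `{n}`, `n ≠ 0`.
An upper bound of the diagonals of `{i + 1}` is infinite, hence contains `0`, so their
supremum is the identity: `f` survives composition with it but not with any `{i + 1}`, which
misses the target `0` of `f`. Dually the diagonals of `{0} ∪ (i, ∞)` all fix `f`, while a
lower bound lies inside `{0}`, is finite, hence misses `0`: their infimum is `∅`. -/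

namespace PFAlg

variable {α : Type*}

def diag (A : Set α) : Set (α × α) := {p | p.1 = p.2 ∧ p.1 ∈ A}

@[simp]
lemma mem_diag {A : Set α} {x y : α} : (x, y) ∈ diag A ↔ x = y ∧ x ∈ A := Iff.rfl

lemma isPF_diag (A : Set α) : IsPF (diag A) := by
  rintro x y z ⟨hy, -⟩ ⟨hz, -⟩
  exact hy.symm.trans hz

@[simp]
lemma diag_empty : diag (∅ : Set α) = ∅ := by
  ext ⟨x, y⟩; simp

lemma diag_subset_diag_iff {A A' : Set α} : diag A ⊆ diag A' ↔ A ⊆ A' := by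
  refine ⟨fun h a ha => (h (show (a, a) ∈ diag A from ⟨rfl, ha⟩)).2, ?_⟩
  rintro h ⟨x, y⟩ ⟨hxy, hx⟩
  exact ⟨hxy, h hx⟩

lemma diag_nonempty_iff {A : Set α} : (diag A).Nonempty ↔ A.Nonempty := by
  refine ⟨fun ⟨⟨x, _⟩, _, hx⟩ => ⟨x, hx⟩, fun ⟨a, ha⟩ => ⟨(a, a), rfl, ha⟩⟩

lemma comp_diag_diag (A A' : Set α) : comp (diag A) (diag A') = diag (A ∩ A') := by
  ext ⟨x, z⟩
  simp only [comp, mem_diag, Set.mem_ofPred_eq, Set.mem_inter_iff]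
  constructor
  · rintro ⟨y, ⟨rfl, hx⟩, rfl, hx'⟩; exact ⟨rfl, hx, hx'⟩
  · rintro ⟨rfl, hx, hx'⟩; exact ⟨x, ⟨rfl, hx⟩, rfl, hx'⟩

lemma diag_inter_diag (A A' : Set α) : diag A ∩ diag A' = diag (A ∩ A') := by
  ext ⟨x, y⟩
  simp only [Set.mem_inter_iff, mem_diag]
  tauto

lemma adom_diag (A : Set α) : adom (diag A) = diag Aᶜ := by
  ext ⟨x, z⟩
  simp only [adom, Set.mem_ofPred_eq, mem_diag, Set.mem_compl_iff]
  constructor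
  · rintro ⟨rfl, h⟩; exact ⟨rfl, fun hx => h x ⟨rfl, hx⟩⟩
  · rintro ⟨rfl, hx⟩; exact ⟨rfl, fun y hy => hx hy.2⟩

lemma comp_empty (f : Set (α × α)) : comp f ∅ = ∅ := by
  ext ⟨x, z⟩; simp [comp]

lemma isPF_singleton (a b : α) : IsPF ({(a, b)} : Set (α × α)) := by
  rintro x y z hy hz
  simp only [Set.mem_singleton_iff, Prod.ext_iff] at hy hz
  rw [hy.2, hz.2]

open Classical in
lemma comp_singleton_diag {a b : α} (A : Set α) :
    comp {(a, b)} (diag A) = if b ∈ A then {(a, b)} else ∅ := by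
  ext ⟨x, z⟩
  split_ifs with hb
  · simp only [comp, Set.mem_ofPred_eq, Set.mem_singleton_iff, Prod.ext_iff, mem_diag]
    constructor
    · rintro ⟨y, ⟨rfl, rfl⟩, rfl, -⟩; exact ⟨rfl, rfl⟩
    · rintro ⟨rfl, rfl⟩; exact ⟨_, ⟨rfl, rfl⟩, rfl, hb⟩
  · simp only [comp, Set.mem_ofPred_eq, Set.mem_singleton_iff, Prod.ext_iff, mem_diag,
      Set.mem_empty_iff_false, iff_false]
    rintro ⟨y, ⟨rfl, rfl⟩, rfl, hy⟩; exact hb hy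

open Classical in
lemma comp_diag_singleton {a b : α} (A : Set α) :
    comp (diag A) {(a, b)} = if a ∈ A then {(a, b)} else ∅ := by
  ext ⟨x, z⟩
  split_ifs with ha
  · simp only [comp, Set.mem_ofPred_eq, Set.mem_singleton_iff, Prod.ext_iff, mem_diag]
    constructor
    · rintro ⟨y, ⟨rfl, -⟩, rfl, rfl⟩; exact ⟨rfl, rfl⟩
    · rintro ⟨rfl, rfl⟩; exact ⟨_, ⟨rfl, ha⟩, rfl, rfl⟩
  · simp only [comp, Set.mem_ofPred_eq, Set.mem_singleton_iff, Prod.ext_iff, mem_diag,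
      Set.mem_empty_iff_false, iff_false]
    rintro ⟨y, ⟨rfl, hx⟩, rfl, rfl⟩; exact ha hx

lemma comp_singleton_singleton {a b : α} (hab : a ≠ b) :
    comp {(a, b)} {(a, b)} = (∅ : Set (α × α)) := by
  ext ⟨x, z⟩
  simp only [comp, Set.mem_ofPred_eq, Set.mem_singleton_iff, Prod.ext_iff,
    Set.mem_empty_iff_false, iff_false]
  rintro ⟨y, ⟨rfl, rfl⟩, h, -⟩; exact hab h.symm

lemma singleton_not_subset_diag {a b : α} (hab : a ≠ b) (A : Set α) : ¬ {(a, b)} ⊆ diag A := by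
  intro h
  exact hab (h rfl).1

lemma singleton_inter_diag {a b : α} (hab : a ≠ b) (A : Set α) : {(a, b)} ∩ diag A = ∅ :=
  Set.singleton_inter_eq_empty.2 (singleton_not_subset_diag hab A ∘ Set.singleton_subset_iff.2)

lemma adom_singleton {a b : α} : adom {(a, b)} = diag ({a}ᶜ : Set α) := by
  ext ⟨x, z⟩
  simp only [adom, Set.mem_ofPred_eq, Set.mem_singleton_iff, Prod.ext_iff, mem_diag,
    Set.mem_compl_iff]
  constructor
  · rintro ⟨rfl, h⟩; exact ⟨rfl, fun hx => h b ⟨hx, rfl⟩⟩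
  · rintro ⟨rfl, hx⟩; exact ⟨rfl, fun y hy => hx hy.1⟩

lemma not_compLeftDistribJoins {F : Set (Set (α × α))} {f m : Set (α × α)}
    {S : Set (Set (α × α))} (hf : f ∈ F) (hempty : ∅ ∈ F) (hS : S ⊆ F) (hm : IsLUBIn F S m)
    (hS_comp : ∀ s ∈ S, comp f s = ∅) (hm_comp : comp f m ≠ ∅) : ¬ CompLeftDistribJoins F := by
  intro hdistrib
  have hbound : ∀ t ∈ (fun s => comp f s) '' S, t ⊆ ∅ := by
    rintro _ ⟨s, hs, rfl⟩
    exact (hS_comp s hs).subset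
  exact hm_comp (Set.subset_empty_iff.1 ((hdistrib f hf S hS m hm).2.2 ∅ hempty hbound))

lemma not_compLeftDistribMeets {F : Set (Set (α × α))} {f m : Set (α × α)}
    {S : Set (Set (α × α))} (hf : f ∈ F) (hS : S ⊆ F) (hS_ne : S.Nonempty) (hm : IsGLBIn F S m)
    (hS_comp : ∀ s ∈ S, comp f s = f) (hm_comp : ¬ f ⊆ comp f m) :
    ¬ CompLeftDistribMeets F := by
  intro hdistrib
  have hbound : ∀ t ∈ (fun s => comp f s) '' S, f ⊆ t := by
    rintro _ ⟨s, hs, rfl⟩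
    exact (hS_comp s hs).symm.subset
  exact hm_comp ((hdistrib f hf S hS hS_ne m hm).2.2 f hf hbound)

section DiagArrowAlg

def diagArrowAlg (B : BooleanSubalgebra (Set α)) (a b : α) : Set (Set (α × α)) :=
  insert {(a, b)} (diag '' (B : Set (Set α)))

variable {B : BooleanSubalgebra (Set α)} {a b : α}

lemma diag_mem_diagArrowAlg {A : Set α} (hA : A ∈ B) : diag A ∈ diagArrowAlg B a b :=
  Set.mem_insert_of_mem _ ⟨A, hA, rfl⟩

lemma singleton_mem_diagArrowAlg : {(a, b)} ∈ diagArrowAlg B a b :=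
  Set.mem_insert _ _

lemma empty_mem_diagArrowAlg : ∅ ∈ diagArrowAlg B a b :=
  diag_empty (α := α) ▸ diag_mem_diagArrowAlg B.bot_mem

lemma isPFAlgebra_diagArrowAlg (hab : a ≠ b) (ha : {a} ∈ B) :
    IsPFAlgebra (diagArrowAlg B a b) where
  nonempty := ⟨_, singleton_mem_diagArrowAlg⟩
  pf := by
    rintro f (rfl | ⟨A, -, rfl⟩)
    exacts [isPF_singleton a b, isPF_diag A]
  comp_mem := by
    rintro f (rfl | ⟨A, hA, rfl⟩) g (rfl | ⟨A', hA', rfl⟩)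
    · rw [comp_singleton_singleton hab]; exact empty_mem_diagArrowAlg
    · rw [comp_singleton_diag]
      split_ifs
      exacts [singleton_mem_diagArrowAlg, empty_mem_diagArrowAlg]
    · rw [comp_diag_singleton]
      split_ifs
      exacts [singleton_mem_diagArrowAlg, empty_mem_diagArrowAlg]
    · rw [comp_diag_diag]; exact diag_mem_diagArrowAlg (B.inf_mem hA hA')
  inter_mem := by
    rintro f (rfl | ⟨A, hA, rfl⟩) g (rfl | ⟨A', hA', rfl⟩)
    · rw [Set.inter_self]; exact singleton_mem_diagArrowAlg
    · rw [singleton_inter_diag hab]; exact empty_mem_diagArrowAlg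
    · rw [Set.inter_comm, singleton_inter_diag hab]; exact empty_mem_diagArrowAlg
    · rw [diag_inter_diag]; exact diag_mem_diagArrowAlg (B.inf_mem hA hA')
  adom_mem := by
    rintro f (rfl | ⟨A, hA, rfl⟩)
    · rw [adom_singleton]; exact diag_mem_diagArrowAlg (B.compl_mem ha)
    · rw [adom_diag]; exact diag_mem_diagArrowAlg (B.compl_mem hA)

lemma isAtomOf_singleton (hab : a ≠ b) : IsAtomOf (diagArrowAlg B a b) {(a, b)} := by
  refine ⟨singleton_mem_diagArrowAlg, Set.singleton_ne_empty _, ?_⟩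
  rintro g (rfl | ⟨A, -, rfl⟩) hg hsub
  · rfl
  · obtain ⟨p, hp⟩ := Set.nonempty_iff_ne_empty.2 hg
    obtain rfl := hsub hp
    exact absurd hp.1 hab

lemma isAtomOf_diag_singleton (hab : a ≠ b) {n : α} (hn : {n} ∈ B) :
    IsAtomOf (diagArrowAlg B a b) (diag {n}) := by
  refine ⟨diag_mem_diagArrowAlg hn,
    Set.nonempty_iff_ne_empty.1 (diag_nonempty_iff.2 (Set.singleton_nonempty n)), ?_⟩
  rintro g (rfl | ⟨A, -, rfl⟩) hg hsub
  · exact absurd hsub (singleton_not_subset_diag hab _)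
  · have hA : A.Nonempty := diag_nonempty_iff.1 (Set.nonempty_iff_ne_empty.2 hg)
    rw [hA.subset_singleton_iff.1 (diag_subset_diag_iff.1 hsub)]

lemma atomic_diagArrowAlg (hab : a ≠ b)
    (hB : ∀ A ∈ B, A.Nonempty → ∃ n ∈ A, {n} ∈ B) : Atomic (diagArrowAlg B a b) := by
  rintro f (rfl | ⟨A, hA, rfl⟩) hf
  · exact ⟨_, isAtomOf_singleton hab, subset_rfl⟩
  · obtain ⟨n, hnA, hn⟩ :=
      hB A hA (diag_nonempty_iff.1 (Set.nonempty_iff_ne_empty.2 hf))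
    exact ⟨_, isAtomOf_diag_singleton hab hn,
      diag_subset_diag_iff.2 (Set.singleton_subset_iff.2 hnA)⟩

lemma isLUBIn_range_diag (hab : a ≠ b) {ι : Type*} {s : ι → Set α} {A : Set α}
    (hA : IsLeast (upperBounds (Set.range s) ∩ B) A) (hs : ∃ i, (s i).Nonempty) :
    IsLUBIn (diagArrowAlg B a b) (Set.range fun i => diag (s i)) (diag A) := by
  refine ⟨diag_mem_diagArrowAlg hA.1.2, ?_, ?_⟩
  · rintro _ ⟨i, rfl⟩
    exact diag_subset_diag_iff.2 (hA.1.1 ⟨i, rfl⟩)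
  · rintro c (rfl | ⟨C, hC, rfl⟩) hc
    · obtain ⟨i, hi⟩ := hs
      obtain ⟨p, hp⟩ := diag_nonempty_iff.2 hi
      obtain rfl := hc _ ⟨i, rfl⟩ hp
      exact absurd hp.1 hab
    · refine diag_subset_diag_iff.2 (hA.2 ⟨?_, hC⟩)
      rintro _ ⟨i, rfl⟩
      exact diag_subset_diag_iff.1 (hc _ ⟨i, rfl⟩)

lemma isGLBIn_range_diag (hab : a ≠ b) {ι : Type*} [Nonempty ι] {s : ι → Set α} {A : Set α}
    (hA : IsGreatest (lowerBounds (Set.range s) ∩ B) A) :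
    IsGLBIn (diagArrowAlg B a b) (Set.range fun i => diag (s i)) (diag A) := by
  refine ⟨diag_mem_diagArrowAlg hA.1.2, ?_, ?_⟩
  · rintro _ ⟨i, rfl⟩
    exact diag_subset_diag_iff.2 (hA.1.1 ⟨i, rfl⟩)
  · rintro c (rfl | ⟨C, hC, rfl⟩) hc
    · exact absurd (hc _ ⟨Classical.arbitrary ι, rfl⟩) (singleton_not_subset_diag hab _)
    · refine diag_subset_diag_iff.2 (hA.2 ⟨?_, hC⟩)
      rintro _ ⟨i, rfl⟩
      exact diag_subset_diag_iff.1 (hc _ ⟨i, rfl⟩)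

end DiagArrowAlg

end PFAlg

namespace PFAlg.Example

open Filter

def eventuallyLikeZero : BooleanSubalgebra (Set ℕ) where
  carrier := {A | ∀ᶠ n in cofinite, n ∈ A ↔ 0 ∈ A}
  supClosed' A hA A' hA' := by
    rw [Set.mem_ofPred_eq] at hA hA' ⊢
    exact (hA.and hA').mono fun _ h => or_congr h.1 h.2
  infClosed' A hA A' hA' := by
    rw [Set.mem_ofPred_eq] at hA hA' ⊢
    exact (hA.and hA').mono fun _ h => and_congr h.1 h.2
  compl_mem' hA := by
    rw [Set.mem_ofPred_eq] at hA ⊢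
    exact hA.mono fun _ h => not_congr h
  bot_mem' := by
    rw [Set.mem_ofPred_eq]
    exact .of_forall fun _ => Iff.rfl

lemma zero_mem_iff_infinite {A : Set ℕ} (hA : A ∈ eventuallyLikeZero) : 0 ∈ A ↔ A.Infinite := by
  have hfin : {n | ¬ (n ∈ A ↔ 0 ∈ A)}.Finite := eventually_cofinite.1 hA
  by_cases h0 : 0 ∈ A
  · simp only [h0, iff_true, true_iff] at hfin ⊢
    exact Set.infinite_of_finite_compl hfin
  · simp only [h0, iff_false, false_iff, not_not, Set.not_infinite] at hfin ⊢
    exact hfin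

lemma singleton_mem_eventuallyLikeZero {n : ℕ} (hn : n ≠ 0) : {n} ∈ eventuallyLikeZero :=
  (eventually_cofinite_ne n).mono fun m hm => by simp [hm, hn.symm]

lemma mem_eventuallyLikeZero_of_finite_compl {A : Set ℕ} (h0 : 0 ∈ A) (hA : Aᶜ.Finite) :
    A ∈ eventuallyLikeZero :=
  eventually_cofinite.2 (hA.subset fun n hn => by simpa [h0] using hn)

lemma insert_zero_Ioi_mem_eventuallyLikeZero (i : ℕ) :
    insert 0 (Set.Ioi i) ∈ eventuallyLikeZero :=
  mem_eventuallyLikeZero_of_finite_compl (Set.mem_insert 0 _)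
    ((Set.finite_Iic i).subset fun n hn => (by simpa using hn : n ≠ 0 ∧ n ≤ i).2)

lemma exists_singleton_mem_eventuallyLikeZero {A : Set ℕ} (hA : A ∈ eventuallyLikeZero)
    (hne : A.Nonempty) : ∃ n ∈ A, {n} ∈ eventuallyLikeZero := by
  suffices ∃ n ∈ A, n ≠ 0 from this.imp fun n hn => ⟨hn.1, singleton_mem_eventuallyLikeZero hn.2⟩
  by_cases h0 : 0 ∈ A
  · obtain ⟨n, hnA, hn⟩ :=
      (((zero_mem_iff_infinite hA).1 h0).sdiff (Set.finite_singleton 0)).nonempty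
    exact ⟨n, hnA, hn⟩
  · obtain ⟨n, hn⟩ := hne
    exact ⟨n, hn, fun h => h0 (h ▸ hn)⟩

lemma isLeast_univ_upperBounds_succ :
    IsLeast (upperBounds (Set.range fun i : ℕ => {i + 1}) ∩ eventuallyLikeZero) Set.univ := by
  refine ⟨⟨fun _ _ => Set.subset_univ _, eventuallyLikeZero.top_mem⟩, ?_⟩
  rintro C ⟨hC, hCB⟩
  have hsucc : ∀ i, i + 1 ∈ C := fun i => hC ⟨i, rfl⟩ rfl
  have h0 : 0 ∈ C := (zero_mem_iff_infinite hCB).2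
    (Set.infinite_of_injective_forall_mem (add_left_injective 1) hsucc)
  rintro (_ | i) -
  exacts [h0, hsucc i]

lemma isGreatest_empty_lowerBounds :
    IsGreatest (lowerBounds (Set.range fun i : ℕ => insert 0 (Set.Ioi i)) ∩ eventuallyLikeZero)
      ∅ := by
  refine ⟨⟨fun _ _ => Set.empty_subset _, eventuallyLikeZero.bot_mem⟩, ?_⟩
  rintro C ⟨hC, hCB⟩ n hn
  have hn0 : n = 0 := by simpa using hC ⟨n, rfl⟩ hn
  subst hn0
  exact (zero_mem_iff_infinite hCB).1 hn ((Set.finite_singleton 0).subset fun m hm => by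
    simpa using hC ⟨m, rfl⟩ hm)

end PFAlg.Example

open PFAlg PFAlg.Example in
/-- there is an atomic algebra of partial functions `F`, an atom `f`,
a countable family `(gᵢ)` with supremum `m` in `(F, ⊆)` such that `f∘gᵢ = ∅` for all `i`
but `f∘m = f ≠ ∅`, and a countable family `(hᵢ)` with infimum `∅` in `(F, ⊆)` such that
`f∘hᵢ = f` for all `i` but `f∘∅ = ∅`.  In particular, composition in `F` is neither
completely left-distributive over joins nor over meets. -/
theorem stmt10 :
    ∃ (X : Type) (F : Set (Set (X × X))), IsPFAlgebra F ∧ Atomic F ∧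
      ∃ f, IsAtomOf F f ∧ f ≠ ∅ ∧
        (∃ g : ℕ → Set (X × X), (∀ i, g i ∈ F) ∧
          ∃ m, IsLUBIn F (Set.range g) m ∧ (∀ i, comp f (g i) = ∅) ∧ comp f m = f) ∧
        (∃ h : ℕ → Set (X × X), (∀ i, h i ∈ F) ∧ IsGLBIn F (Set.range h) ∅ ∧
          (∀ i, comp f (h i) = f) ∧ comp f (∅ : Set (X × X)) = ∅) ∧
        ¬ CompLeftDistribJoins F ∧ ¬ CompLeftDistribMeets F := by
  set F := diagArrowAlg eventuallyLikeZero 1 0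
  have hf : IsAtomOf F {(1, 0)} := isAtomOf_singleton one_ne_zero
  have hg_mem (i : ℕ) : diag {i + 1} ∈ F :=
    diag_mem_diagArrowAlg (singleton_mem_eventuallyLikeZero i.succ_ne_zero)
  have hh_mem (i : ℕ) : diag (insert 0 (Set.Ioi i)) ∈ F :=
    diag_mem_diagArrowAlg (insert_zero_Ioi_mem_eventuallyLikeZero i)
  have hlub : IsLUBIn F (Set.range fun i => diag {i + 1}) (diag Set.univ) :=
    isLUBIn_range_diag one_ne_zero isLeast_univ_upperBounds_succ ⟨0, Set.singleton_nonempty _⟩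
  have hglb : IsGLBIn F (Set.range fun i => diag (insert 0 (Set.Ioi i))) (diag ∅) :=
    isGLBIn_range_diag one_ne_zero isGreatest_empty_lowerBounds
  rw [diag_empty] at hglb
  have hg_comp (i : ℕ) : comp {(1, 0)} (diag {i + 1}) = ∅ := by simp [comp_singleton_diag]
  have hh_comp (i : ℕ) : comp {(1, 0)} (diag (insert 0 (Set.Ioi i))) = {(1, 0)} := by
    simp [comp_singleton_diag]
  have hm_comp : comp {(1, 0)} (diag Set.univ) = {((1 : ℕ), (0 : ℕ))} := by
    simp [comp_singleton_diag]
  refine ⟨ℕ, F,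
    isPFAlgebra_diagArrowAlg one_ne_zero (singleton_mem_eventuallyLikeZero one_ne_zero),
    atomic_diagArrowAlg one_ne_zero fun _ => exists_singleton_mem_eventuallyLikeZero,
    _, hf, hf.2.1, ⟨_, hg_mem, _, hlub, hg_comp, hm_comp⟩,
    ⟨_, hh_mem, hglb, hh_comp, comp_empty _⟩, ?_, ?_⟩
  · exact not_compLeftDistribJoins hf.1 empty_mem_diagArrowAlg (Set.range_subset_iff.2 hg_mem)
      hlub (Set.forall_mem_range.2 hg_comp) (by rw [hm_comp]; exact hf.2.1)
  · exact not_compLeftDistribMeets hf.1 (Set.range_subset_iff.2 hh_mem) (Set.range_nonempty _)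
      hglb (Set.forall_mem_range.2 hh_comp) (by simp [comp_empty])
end

section
/- Let F be an algebra of partial functions that admits a complete representation by partial functions. Then composition in F is completely left-distributive over joins: for every a ∈ F and every S ⊆ F whose supremum ⨆S exists in (F, ⊆), the supremum of {a∘s : s ∈ S} exists in (F, ⊆) and equals a∘(⨆S). -/
/-!
A representation `θ` turns `⊆` into `⊆` and reflects it, since `f ⊆ g` iff `f ∩ g = f` and `θ`
is injective and preserves `∩`. Composition of relations distributes over arbitrary unions, so a
join complete `θ` gives `θ (a ∘ ⨆S) = θ a ∘ ⋃ θ s = ⋃ θ (a ∘ s)`; every upper bound `c` of the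
`a ∘ s` has `θ (a ∘ s) ⊆ θ c`, hence `a ∘ ⨆S ⊆ c`.
-/

namespace PFAlg

variable {X Y : Type*}

theorem comp_mono_right {a s t : Set (X × X)} (h : s ⊆ t) : comp a s ⊆ comp a t :=
  fun _ ⟨y, hay, hys⟩ => ⟨y, hay, h hys⟩

theorem comp_biUnion {ι : Type*} (a : Set (X × X)) (S : Set ι) (g : ι → Set (X × X)) :
    comp a (⋃ s ∈ S, g s) = ⋃ s ∈ S, comp a (g s) := by
  ext p
  simp only [comp, Set.mem_ofPred_eq, Set.mem_iUnion]
  exact ⟨fun ⟨y, hay, s, hs, hys⟩ => ⟨s, hs, y, hay, hys⟩,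
    fun ⟨s, hs, y, hay, hys⟩ => ⟨y, hay, s, hs, hys⟩⟩

namespace IsRep

variable {F : Set (Set (X × X))} {θ : Set (X × X) → Set (Y × Y)}

theorem monotoneOn_s12 (hθ : IsRep F θ) {f g : Set (X × X)} (hf : f ∈ F) (hg : g ∈ F)
    (h : f ⊆ g) : θ f ⊆ θ g := by
  rw [← Set.inter_eq_left.mpr h, hθ.inter_eq f hf g hg]
  exact Set.inter_subset_right

theorem subset_iff (hθ : IsRep F θ) (hF : IsPFAlgebra F) {f g : Set (X × X)} (hf : f ∈ F)
    (hg : g ∈ F) : θ f ⊆ θ g ↔ f ⊆ g := by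
  refine ⟨fun h => ?_, hθ.monotoneOn_s12 hf hg⟩
  have hθinter : θ (f ∩ g) = θ f := by
    rw [hθ.inter_eq f hf g hg, Set.inter_eq_left.mpr h]
  rw [← hθ.injOn (hF.inter_mem f hf g hg) hf hθinter]
  exact Set.inter_subset_right

end IsRep

end PFAlg

open PFAlg in
theorem stmt12_general {X Y : Type*} (F : Set (Set (X × X))) (hF : IsPFAlgebra F)
    (θ : Set (X × X) → Set (Y × Y)) (hθ : IsRep F θ)
    (hjoin : JoinComplete F θ) :
    CompLeftDistribJoins F := by
  intro a ha S hS m hm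
  have ham : comp a m ∈ F := hF.comp_mem a ha m hm.1
  refine ⟨ham, ?_, fun c hc hcub => ?_⟩
  · rintro _ ⟨s, hs, rfl⟩
    exact comp_mono_right (hm.2.1 s hs)
  · rw [← hθ.subset_iff hF ham hc, hθ.comp_eq a ha m hm.1, hjoin S hS m hm, comp_biUnion]
    refine Set.iUnion₂_subset fun s hs => ?_
    rw [← hθ.comp_eq a ha s (hS hs)]
    exact hθ.monotoneOn_s12 (hF.comp_mem a ha s (hS hs)) hc (hcub _ (Set.mem_image_of_mem _ hs))

open PFAlg in
/-- if an algebra of partial functions admits a complete representation by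
partial functions, then composition is completely left-distributive over joins. -/
theorem stmt12 {X Y : Type*} (F : Set (Set (X × X))) (hF : IsPFAlgebra F)
    (θ : Set (X × X) → Set (Y × Y)) (hθ : IsRep F θ)
    (hmeet : MeetComplete F θ) (hjoin : JoinComplete F θ) :
    CompLeftDistribJoins F :=
  stmt12_general F hF θ hθ hjoin
end

section
/- Let F be an algebra of partial functions that admits a complete representation by partial functions. Then composition in F is completely left-distributive over meets: for every a ∈ F and every nonempty S ⊆ F whose infimum ⨅S exists in (F, ⊆), the infimum of {a∘s : s ∈ S} exists in (F, ⊆) and equals a∘(⨅S). -/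
/-!
A representation `θ` reflects inclusion, since `u ⊆ v` iff `u ∩ v = u` and `θ` is injective and
preserves `∩`. So to see that `a ∘ ⨅S` is below every lower bound `c` of `{a ∘ s : s ∈ S}` it
suffices to check `θ c ⊆ θ (a ∘ ⨅S) = θ a ∘ ⋂ θ s`, using meet completeness. Finally, left
composition with a partial function distributes over nonempty intersections: if `(x, z)` lies in
every `θ a ∘ θ s`, the intermediate point is the unique image of `x` under `θ a`.
-/

namespace PFAlg

variable {X Y : Type*}

theorem comp_mono_right_s13 {a f g : Set (X × X)} (hfg : f ⊆ g) : comp a f ⊆ comp a g :=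
  fun _ ⟨y, hay, hf⟩ => ⟨y, hay, hfg hf⟩

theorem IsPF.comp_biInter {ι : Type*} {a : Set (X × X)} (ha : IsPF a) {S : Set ι}
    (hS : S.Nonempty) (t : ι → Set (X × X)) :
    comp a (⋂ i ∈ S, t i) = ⋂ i ∈ S, comp a (t i) := by
  refine Set.Subset.antisymm
    (Set.subset_iInter₂ fun i hi => comp_mono_right_s13 (Set.biInter_subset_of_mem hi)) ?_
  intro p hp
  simp only [Set.mem_iInter] at hp
  obtain ⟨i₀, hi₀⟩ := hS
  obtain ⟨y, hay, -⟩ := hp i₀ hi₀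
  refine ⟨y, hay, Set.mem_iInter₂.2 fun i hi => ?_⟩
  obtain ⟨y', hay', hy'⟩ := hp i hi
  rwa [ha hay' hay] at hy'

theorem IsRep.subset_iff_s13 {F : Set (Set (X × X))} {θ : Set (X × X) → Set (Y × Y)}
    (hθ : IsRep F θ) {u v : Set (X × X)} (hu : u ∈ F) (hv : v ∈ F) (huv : u ∩ v ∈ F) :
    u ⊆ v ↔ θ u ⊆ θ v := by
  rw [← Set.inter_eq_left, ← Set.inter_eq_left, ← hθ.inter_eq u hu v hv]
  exact ⟨congrArg θ, fun h => hθ.injOn huv hu h⟩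

end PFAlg

open PFAlg in
theorem stmt13_general {X Y : Type*} (F : Set (Set (X × X))) (hF : IsPFAlgebra F)
    (θ : Set (X × X) → Set (Y × Y)) (hθ : IsRep F θ)
    (hmeet : MeetComplete F θ) :
    CompLeftDistribMeets F := by
  intro a ha S hS hSne m hm
  have ham : comp a m ∈ F := hF.comp_mem a ha m hm.1
  refine ⟨ham, ?_, fun c hc hcS => ?_⟩
  · rintro _ ⟨s, hs, rfl⟩
    exact comp_mono_right_s13 (hm.2.1 s hs)
  rw [hθ.subset_iff_s13 hc ham (hF.inter_mem c hc _ ham), hθ.comp_eq a ha m hm.1,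
    hmeet S hS hSne m hm, (hθ.pf a ha).comp_biInter hSne]
  refine Set.subset_iInter₂ fun s hs => ?_
  have has : comp a s ∈ F := hF.comp_mem a ha s (hS hs)
  rw [← hθ.comp_eq a ha s (hS hs), ← hθ.subset_iff_s13 hc has (hF.inter_mem c hc _ has)]
  exact hcS _ ⟨s, hs, rfl⟩

open PFAlg in
/-- if an algebra of partial functions admits a complete representation by
partial functions, then composition is completely left-distributive over meets. -/
theorem stmt13 {X Y : Type*} (F : Set (Set (X × X))) (hF : IsPFAlgebra F)
    (θ : Set (X × X) → Set (Y × Y)) (hθ : IsRep F θ)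
    (hmeet : MeetComplete F θ) (hjoin : JoinComplete F θ) :
    CompLeftDistribMeets F :=
  stmt13_general F hF θ hθ hmeet
end

section
/- Let F be an algebra of partial functions, let x be an atom of F, and let a ∈ F be such that x∘a ≠ ∅. Then x∘a is an atom of F. -/
/-! If `g ∈ F` is nonempty and `g ⊆ x∘a`, then restricting the atom `x` to the domain of `g`,
via the domain element `A(A(g))`, gives a nonempty member of `F` below `x`, hence `x` itself.
So `g` is defined wherever `x∘a` is; as `x∘a` is a partial function, `g = x∘a`. -/

namespace PFAlg

open SetRel

variable {X : Type*} {F : Set (Set (X × X))} {f g h x : Set (X × X)}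

lemma IsPF.comp (hf : IsPF f) (hg : IsPF g) : IsPF (comp f g) := by
  rintro p q r ⟨u, hpu, huq⟩ ⟨v, hpv, hvr⟩
  obtain rfl := hf hpu hpv
  exact hg huq hvr

lemma IsPF.eq_of_subset_of_dom_subset (hh : IsPF h) (hgh : g ⊆ h) (hdom : dom h ⊆ dom g) :
    g = h := by
  refine hgh.antisymm fun ⟨p, r⟩ hpr => ?_
  obtain ⟨s, hps⟩ := hdom ⟨r, hpr⟩
  obtain rfl : s = r := hh (hgh hps) hpr
  exact hps

lemma dom_comp_subset : dom (comp f g) ⊆ dom f :=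
  fun _ ⟨_, q, hpq, _⟩ => ⟨q, hpq⟩

lemma mem_adom_adom_iff {p q : X} : (p, q) ∈ adom (adom f) ↔ p = q ∧ p ∈ dom f := by
  simp [adom]

lemma mem_comp_adom_adom_iff {p q : X} :
    (p, q) ∈ comp (adom (adom f)) g ↔ p ∈ dom f ∧ (p, q) ∈ g := by
  simp only [comp, Set.mem_ofPred_eq, mem_adom_adom_iff]
  constructor
  · rintro ⟨_, ⟨rfl, hp⟩, hpq⟩
    exact ⟨hp, hpq⟩
  · rintro ⟨hp, hpq⟩
    exact ⟨p, ⟨rfl, hp⟩, hpq⟩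

lemma IsAtomOf.dom_subset (hF : IsPFAlgebra F) (hx : IsAtomOf F x) (hg : g ∈ F)
    (hmeet : (dom x ∩ dom g).Nonempty) : dom x ⊆ dom g := by
  obtain ⟨hxF, -, hxmin⟩ := hx
  have hrestrict : comp (adom (adom g)) x = x := by
    refine hxmin _ (hF.comp_mem _ (hF.adom_mem _ (hF.adom_mem g hg)) x hxF) ?_
      fun _ hp => (mem_comp_adom_adom_iff.1 hp).2
    obtain ⟨p, ⟨q, hpq⟩, hpg⟩ := hmeet
    exact Set.nonempty_iff_ne_empty.1 ⟨(p, q), mem_comp_adom_adom_iff.2 ⟨hpg, hpq⟩⟩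
  rintro p ⟨q, hpq⟩
  rw [← hrestrict] at hpq
  exact (mem_comp_adom_adom_iff.1 hpq).1

end PFAlg

open PFAlg in
/-- if `x` is an atom of an algebra of partial functions `F`, `a ∈ F` and
`x∘a ≠ ∅`, then `x∘a` is an atom of `F`. -/
theorem stmt14 {X : Type*} (F : Set (Set (X × X))) (hF : IsPFAlgebra F)
    (x a : Set (X × X)) (hx : IsAtomOf F x) (ha : a ∈ F) (hne : comp x a ≠ ∅) :
    IsAtomOf F (comp x a) := by
  refine ⟨hF.comp_mem x hx.1 a ha, hne, fun g hgF hgne hg => ?_⟩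
  refine IsPF.eq_of_subset_of_dom_subset ((hF.pf x hx.1).comp (hF.pf a ha)) hg ?_
  obtain ⟨⟨p, r⟩, hpr⟩ := Set.nonempty_iff_ne_empty.2 hgne
  have hpg : p ∈ SetRel.dom g := ⟨r, hpr⟩
  calc SetRel.dom (comp x a) ⊆ SetRel.dom x := dom_comp_subset
    _ ⊆ SetRel.dom g :=
      hx.dom_subset hF hgF ⟨p, dom_comp_subset (SetRel.dom_mono hg hpg), hpg⟩
end

section
/- Let F be an algebra of partial functions that is atomic. Then F is atomistic: every f ∈ F is the supremum in (F, ⊆) of the set {x : x is an atom of F and x ⊆ f}. -/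
/-! If `f ∈ F` escapes an upper bound `c` of the atoms below `f`, say at `(x, y)`, restrict `f` to
the points where `f ∩ c` is undefined: `A(f ∩ c) ∘ f` lies in `F`, below `f`, contains `(x, y)`
and is disjoint from `c`. An atom below it is then an atom below `f` that is not below `c`. -/

namespace PFAlg

variable {X : Type*}

theorem mem_comp_adom_iff {f g : Set (X × X)} {x y : X} :
    (x, y) ∈ comp (adom g) f ↔ (x, y) ∈ f ∧ ∀ z, (x, z) ∉ g := by
  constructor
  · rintro ⟨w, ⟨hxw, hw⟩, hf⟩
    obtain rfl : x = w := hxw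
    exact ⟨hf, hw⟩
  · rintro ⟨hf, hg⟩
    exact ⟨x, ⟨rfl, hg⟩, hf⟩

theorem comp_adom_subset (f g : Set (X × X)) : comp (adom g) f ⊆ f := by
  rintro ⟨x, y⟩ h
  exact (mem_comp_adom_iff.1 h).1

theorem disjoint_comp_adom (f g : Set (X × X)) : Disjoint (comp (adom g) f) g := by
  refine Set.disjoint_left.2 ?_
  rintro ⟨x, y⟩ hfg hg
  exact (mem_comp_adom_iff.1 hfg).2 y hg

theorem mem_comp_adom_inter {f c : Set (X × X)} (hf : IsPF f) {x y : X} (hxy : (x, y) ∈ f)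
    (hxy' : (x, y) ∉ c) : (x, y) ∈ comp (adom (f ∩ c)) f :=
  mem_comp_adom_iff.2 ⟨hxy, fun _ hz => hxy' (hf hz.1 hxy ▸ hz.2)⟩

end PFAlg

open PFAlg in
/-- an atomic algebra of partial functions is atomistic: every `f ∈ F` is the
supremum in `(F, ⊆)` of the atoms of `F` below it. -/
theorem stmt16 {X : Type*} (F : Set (Set (X × X))) (hF : IsPFAlgebra F)
    (hatomic : Atomic F) :
    ∀ f ∈ F, IsLUBIn F {x | IsAtomOf F x ∧ x ⊆ f} f := by
  intro f hf
  refine ⟨hf, fun _ hs => hs.2, fun c hc hub => ?_⟩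
  rintro ⟨x, y⟩ hxy
  by_contra hxy'
  set g := comp (adom (f ∩ c)) f
  have hgF : g ∈ F := hF.comp_mem _ (hF.adom_mem _ (hF.inter_mem f hf c hc)) f hf
  have hg : g ≠ ∅ :=
    Set.nonempty_iff_ne_empty.1 ⟨_, mem_comp_adom_inter (hF.pf f hf) hxy hxy'⟩
  obtain ⟨b, hb, hbg⟩ := hatomic g hgF hg
  have hbf : b ⊆ f := hbg.trans (comp_adom_subset f _)
  have hbc : b ⊆ f ∩ c := Set.subset_inter hbf (hub b ⟨hb, hbf⟩)
  have hbb : Disjoint b b := (disjoint_comp_adom f (f ∩ c)).mono hbg hbc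
  exact hb.2.1 (disjoint_self.1 hbb)
end
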